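/- arXiv:2104.03087 — 3 statements merged into one kernel-verified Lean document; each statement's English description precedes it below -/
import Mathlib

section
/- Let p be a positive integer, let Π and Π̂ be real p×p matrices, and let γ > 0. Then the number of indices j with Π_jj = 0 and Π̂_jj ≥ γ, plus the number of indices j with Π_jj ≥ 2γ and Π̂_jj < γ, is at most ‖Π − Π̂‖_F² / γ². -/
open Matrix Finset

/-- Counting bound on false positives plus false negatives of diagonal thresholding. -/
theorem stmt1 {p : ℕ} (hp : 0 < p) (Pi PiHat : Matrix (Fin p) (Fin p) ℝ)
    (γ : ℝ) (hγ : 0 < γ) :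
    (((Finset.univ.filter fun j : Fin p => Pi j j = 0 ∧ γ ≤ PiHat j j).card : ℝ)
      + ((Finset.univ.filter fun j : Fin p => 2 * γ ≤ Pi j j ∧ PiHat j j < γ).card : ℝ))
      ≤ (∑ i, ∑ j, (Pi i j - PiHat i j) ^ 2) / γ ^ 2 := by
  set A := Finset.univ.filter fun j : Fin p => Pi j j = 0 ∧ γ ≤ PiHat j j with hA
  set B := Finset.univ.filter fun j : Fin p => 2 * γ ≤ Pi j j ∧ PiHat j j < γ with hB
  set S := Finset.univ.filter fun j : Fin p => γ ^ 2 ≤ (Pi j j - PiHat j j) ^ 2 with hS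
  have hdisj : Disjoint A B := by
    rw [Finset.disjoint_left]
    intro j hjA hjB
    simp only [hA, hB, Finset.mem_filter] at hjA hjB
    nlinarith [hjA.2.1, hjB.2.1]
  have hsub : A ∪ B ⊆ S := by
    intro j hj
    simp only [hA, hB, hS, Finset.mem_union, Finset.mem_filter, Finset.mem_univ,
      true_and] at hj ⊢
    rcases hj with ⟨h1, h2⟩ | ⟨h1, h2⟩
    · nlinarith
    · nlinarith
  have hcard : (A.card : ℝ) + B.card ≤ S.card := by
    have := Finset.card_le_card hsub
    rw [Finset.card_union_of_disjoint hdisj] at this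
    exact_mod_cast this
  have h1 : γ ^ 2 * (S.card : ℝ) ≤ ∑ j ∈ S, (Pi j j - PiHat j j) ^ 2 := by
    rw [mul_comm, ← nsmul_eq_mul, ← Finset.sum_const]
    exact Finset.sum_le_sum fun j hj => (Finset.mem_filter.mp hj).2
  have h2 : ∑ j ∈ S, (Pi j j - PiHat j j) ^ 2 ≤ ∑ i, ∑ j, (Pi i j - PiHat i j) ^ 2 := by
    calc ∑ j ∈ S, (Pi j j - PiHat j j) ^ 2
        ≤ ∑ j, (Pi j j - PiHat j j) ^ 2 :=
          Finset.sum_le_sum_of_subset_of_nonneg (Finset.subset_univ S)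
            (fun i _ _ => sq_nonneg _)
      _ ≤ ∑ i, ∑ j, (Pi i j - PiHat i j) ^ 2 :=
          Finset.sum_le_sum fun i _ =>
            Finset.single_le_sum (fun j _ => sq_nonneg (Pi i j - PiHat i j))
              (Finset.mem_univ i)
  rw [le_div_iff₀ (by positivity)]
  nlinarith
end

section
/- Let N be a positive integer, x ∈ ℝ^N, 0 < q ≤ 1, and τ > 0. Then Σ_{i=1}^N |x_i| ≤ τ^{−q/2} (Σ_{i=1}^N x_i²)^{1/2} (Σ_{i=1}^N |x_i|^q)^{1/2} + τ^{1−q} Σ_{i=1}^N |x_i|^q. -/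
open Finset

/-- The ℓ1–ℓ2–ℓq interpolation bound. -/
theorem stmt2 {N : ℕ} (hN : 0 < N) (x : Fin N → ℝ) (q : ℝ) (hq0 : 0 < q) (hq1 : q ≤ 1)
    (τ : ℝ) (hτ : 0 < τ) :
    ∑ i, |x i| ≤
      τ ^ (-(q / 2)) * (∑ i, (x i) ^ 2) ^ ((1 : ℝ) / 2) * (∑ i, |x i| ^ q) ^ ((1 : ℝ) / 2)
        + τ ^ (1 - q) * ∑ i, |x i| ^ q := by
  have habs : ∀ i, (0:ℝ) ≤ |x i| := fun i => abs_nonneg _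
  have hqnn : (0:ℝ) ≤ q := le_of_lt hq0
  set p : Fin N → Prop := fun i => τ ≤ |x i| with hp
  have hsplit : ∑ i ∈ univ.filter p, |x i| + ∑ i ∈ univ.filter (fun i => ¬ p i), |x i|
      = ∑ i, |x i| := Finset.sum_filter_add_sum_filter_not univ p _
  -- small part
  have hsmall : ∑ i ∈ univ.filter (fun i => ¬ p i), |x i|
      ≤ τ ^ (1 - q) * ∑ i, |x i| ^ q := by
    have h1 : ∑ i ∈ univ.filter (fun i => ¬ p i), |x i|
        ≤ ∑ i ∈ univ.filter (fun i => ¬ p i), τ ^ (1 - q) * |x i| ^ q := by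
      apply Finset.sum_le_sum
      intro i hi
      have hlt : |x i| ≤ τ := le_of_lt (lt_of_not_ge (Finset.mem_filter.mp hi).2)
      have h2 : |x i| = |x i| ^ (1 - q) * |x i| ^ q := by
        rw [← Real.rpow_add' (habs i) (by norm_num)]
        simp
      calc |x i| = |x i| ^ (1 - q) * |x i| ^ q := h2
        _ ≤ τ ^ (1 - q) * |x i| ^ q :=
          mul_le_mul_of_nonneg_right
            (Real.rpow_le_rpow (habs i) hlt (by linarith : (0:ℝ) ≤ 1 - q))
            (Real.rpow_nonneg (habs i) q)
    calc ∑ i ∈ univ.filter (fun i => ¬ p i), |x i|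
        ≤ ∑ i ∈ univ.filter (fun i => ¬ p i), τ ^ (1 - q) * |x i| ^ q := h1
      _ = τ ^ (1 - q) * ∑ i ∈ univ.filter (fun i => ¬ p i), |x i| ^ q := by
          rw [Finset.mul_sum]
      _ ≤ τ ^ (1 - q) * ∑ i, |x i| ^ q := by
          apply mul_le_mul_of_nonneg_left _ (Real.rpow_nonneg (le_of_lt hτ) _)
          exact Finset.sum_le_sum_of_subset_of_nonneg (Finset.filter_subset _ _)
            (fun i _ _ => Real.rpow_nonneg (habs i) q)
  -- big part
  have hbig : ∑ i ∈ univ.filter p, |x i|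
      ≤ τ ^ (-(q / 2)) * (∑ i, (x i) ^ 2) ^ ((1:ℝ) / 2) * (∑ i, |x i| ^ q) ^ ((1:ℝ) / 2) := by
    have h1 : ∑ i ∈ univ.filter p, |x i|
        ≤ τ ^ (-(q / 2)) * ∑ i ∈ univ.filter p, |x i| * |x i| ^ (q / 2) := by
      rw [Finset.mul_sum]
      apply Finset.sum_le_sum
      intro i hi
      have hτi : τ ≤ |x i| := (Finset.mem_filter.mp hi).2
      have hpos : 0 < |x i| := lt_of_lt_of_le hτ hτi
      have h2 : |x i| = |x i| ^ (-(q / 2)) * (|x i| * |x i| ^ (q / 2)) := by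
        rw [mul_comm |x i| (|x i| ^ (q / 2)), ← mul_assoc,
          ← Real.rpow_add hpos]
        simp
      calc |x i| = |x i| ^ (-(q / 2)) * (|x i| * |x i| ^ (q / 2)) := h2
        _ ≤ τ ^ (-(q / 2)) * (|x i| * |x i| ^ (q / 2)) := by
            apply mul_le_mul_of_nonneg_right
              (Real.rpow_le_rpow_of_nonpos hτ hτi (by linarith : -(q / 2) ≤ 0))
            positivity
    have hCS : ∑ i ∈ univ.filter p, |x i| * |x i| ^ (q / 2)
        ≤ (∑ i, (x i) ^ 2) ^ ((1:ℝ) / 2) * (∑ i, |x i| ^ q) ^ ((1:ℝ) / 2) := by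
      have hcs2 : (∑ i ∈ univ.filter p, |x i| * |x i| ^ (q / 2)) ^ 2
          ≤ (∑ i ∈ univ.filter p, |x i| ^ 2) * ∑ i ∈ univ.filter p, (|x i| ^ (q / 2)) ^ 2 :=
        Finset.sum_mul_sq_le_sq_mul_sq _ _ _
      have heq1 : ∀ i, (|x i| ^ (q / 2) : ℝ) ^ (2:ℕ) = |x i| ^ q := by
        intro i
        rw [← Real.rpow_natCast (|x i| ^ (q / 2)) 2, ← Real.rpow_mul (habs i)]
        norm_num
      have hA : ∑ i ∈ univ.filter p, |x i| ^ 2 ≤ ∑ i, (x i) ^ 2 := by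
        calc ∑ i ∈ univ.filter p, |x i| ^ 2 = ∑ i ∈ univ.filter p, (x i) ^ 2 := by
              simp [sq_abs]
          _ ≤ ∑ i, (x i) ^ 2 := Finset.sum_le_sum_of_subset_of_nonneg
              (Finset.filter_subset _ _) (fun i _ _ => sq_nonneg _)
      have hB : ∑ i ∈ univ.filter p, (|x i| ^ (q / 2)) ^ 2 ≤ ∑ i, |x i| ^ q := by
        calc ∑ i ∈ univ.filter p, (|x i| ^ (q / 2)) ^ 2
            = ∑ i ∈ univ.filter p, |x i| ^ q := by
              apply Finset.sum_congr rfl; intro i _; exact heq1 i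
          _ ≤ ∑ i, |x i| ^ q := Finset.sum_le_sum_of_subset_of_nonneg
              (Finset.filter_subset _ _) (fun i _ _ => Real.rpow_nonneg (habs i) q)
      have hsum_nn : 0 ≤ ∑ i ∈ univ.filter p, |x i| * |x i| ^ (q / 2) := by
        apply Finset.sum_nonneg; intro i _; positivity
      have hA' : (0:ℝ) ≤ ∑ i, (x i) ^ 2 := Finset.sum_nonneg fun i _ => sq_nonneg _
      have hB' : (0:ℝ) ≤ ∑ i, |x i| ^ q :=
        Finset.sum_nonneg fun i _ => Real.rpow_nonneg (habs i) q
      have hsq : (∑ i ∈ univ.filter p, |x i| * |x i| ^ (q / 2)) ^ 2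
          ≤ (∑ i, (x i) ^ 2) * ∑ i, |x i| ^ q := by
        calc (∑ i ∈ univ.filter p, |x i| * |x i| ^ (q / 2)) ^ 2
            ≤ (∑ i ∈ univ.filter p, |x i| ^ 2) * ∑ i ∈ univ.filter p, (|x i| ^ (q / 2)) ^ 2 :=
              hcs2
          _ ≤ (∑ i, (x i) ^ 2) * ∑ i, |x i| ^ q := by
              apply mul_le_mul hA hB _ hA'
              apply Finset.sum_nonneg; intro i _; positivity
      -- take square roots
      have h3 : ∑ i ∈ univ.filter p, |x i| * |x i| ^ (q / 2)
          ≤ Real.sqrt ((∑ i, (x i) ^ 2) * ∑ i, |x i| ^ q) := by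
        rw [← Real.sqrt_sq hsum_nn]
        exact Real.sqrt_le_sqrt hsq
      calc ∑ i ∈ univ.filter p, |x i| * |x i| ^ (q / 2)
          ≤ Real.sqrt ((∑ i, (x i) ^ 2) * ∑ i, |x i| ^ q) := h3
        _ = (∑ i, (x i) ^ 2) ^ ((1:ℝ) / 2) * (∑ i, |x i| ^ q) ^ ((1:ℝ) / 2) := by
            rw [Real.sqrt_mul hA', Real.sqrt_eq_rpow, Real.sqrt_eq_rpow]
    calc ∑ i ∈ univ.filter p, |x i|
        ≤ τ ^ (-(q / 2)) * ∑ i ∈ univ.filter p, |x i| * |x i| ^ (q / 2) := h1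
      _ ≤ τ ^ (-(q / 2)) * ((∑ i, (x i) ^ 2) ^ ((1:ℝ) / 2) * (∑ i, |x i| ^ q) ^ ((1:ℝ) / 2)) := by
          exact mul_le_mul_of_nonneg_left hCS (Real.rpow_nonneg (le_of_lt hτ) _)
      _ = τ ^ (-(q / 2)) * (∑ i, (x i) ^ 2) ^ ((1:ℝ) / 2) * (∑ i, |x i| ^ q) ^ ((1:ℝ) / 2) := by
          ring
  linarith
end

section
/- Let Γ and S be real symmetric p×p matrices, δ > 0, ρ ≥ 0, and let U, Û be real p×d matrices with UᵀU = ÛᵀÛ = I_d. Set Π = UUᵀ and Π̂ = ÛÛᵀ. Assume the curvature condition (δ/2)‖Π − Π̂‖_F² ≤ ⟨Γ, Π − Π̂⟩ and the optimality condition trace(Ûᵀ S Û) − ρ‖Û‖₁ ≥ trace(Uᵀ S U) − ρ‖U‖₁. Then (δ/2)‖Π − Π̂‖_F² ≤ ‖S − Γ‖_∞ ‖Π − Π̂‖₁ + ρ‖U − Û‖₁. -/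
open Matrix Finset

/-- The basic inequality converting curvature and penalized optimality into an
elementwise Hölder bound plus a penalty term. Here ⟨A,B⟩ = trace(AᵀB),
‖·‖_F² is the sum of squared entries, ‖·‖₁ the elementwise ℓ1 norm and
‖·‖_∞ the elementwise sup norm. -/
theorem stmt8 {p d : ℕ} (hp : 0 < p) (hd : 0 < d)
    (Γ S : Matrix (Fin p) (Fin p) ℝ) (hΓ : Γ.IsSymm) (hS : S.IsSymm)
    (δ ρ : ℝ) (hδ : 0 < δ) (hρ : 0 ≤ ρ)
    (U Uhat : Matrix (Fin p) (Fin d) ℝ) (hU : Uᵀ * U = 1) (hUhat : Uhatᵀ * Uhat = 1)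
    (hcurv : δ / 2 * (∑ i, ∑ j, ((U * Uᵀ - Uhat * Uhatᵀ) i j) ^ 2)
        ≤ Matrix.trace (Γᵀ * (U * Uᵀ - Uhat * Uhatᵀ)))
    (hopt : Matrix.trace (Uᵀ * S * U) - ρ * (∑ i, ∑ l, |U i l|)
        ≤ Matrix.trace (Uhatᵀ * S * Uhat) - ρ * (∑ i, ∑ l, |Uhat i l|)) :
    δ / 2 * (∑ i, ∑ j, ((U * Uᵀ - Uhat * Uhatᵀ) i j) ^ 2)
      ≤ (⨆ i, ⨆ j, |(S - Γ) i j|) * (∑ i, ∑ j, |(U * Uᵀ - Uhat * Uhatᵀ) i j|)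
        + ρ * (∑ i, ∑ l, |(U - Uhat) i l|) := by
  set Δ : Matrix (Fin p) (Fin p) ℝ := U * Uᵀ - Uhat * Uhatᵀ with hΔ
  set M : ℝ := ⨆ i, ⨆ j, |(S - Γ) i j| with hMdef
  -- trace of transpose-product as entrywise sum
  have htr : ∀ (A B : Matrix (Fin p) (Fin p) ℝ),
      Matrix.trace (Aᵀ * B) = ∑ i, ∑ j, A i j * B i j := by
    intro A B
    rw [Matrix.trace]
    simp only [Matrix.diag, Matrix.mul_apply, Matrix.transpose_apply]
    rw [Finset.sum_comm]
  -- split trace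
  have hsplit : Matrix.trace (Γᵀ * Δ)
      = Matrix.trace ((Γ - S)ᵀ * Δ) + Matrix.trace (Sᵀ * Δ) := by
    rw [Matrix.transpose_sub, Matrix.sub_mul, Matrix.trace_sub]; ring
  -- the S part equals trace difference
  have hSpart : Matrix.trace (Sᵀ * Δ)
      = Matrix.trace (Uᵀ * S * U) - Matrix.trace (Uhatᵀ * S * Uhat) := by
    rw [hΔ, hS.eq, Matrix.mul_sub, Matrix.trace_sub]
    congr 1
    · rw [← Matrix.mul_assoc, Matrix.trace_mul_comm (S * U) Uᵀ, ← Matrix.mul_assoc]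
    · rw [← Matrix.mul_assoc, Matrix.trace_mul_comm (S * Uhat) Uhatᵀ, ← Matrix.mul_assoc]
  -- optimality bound on the S part
  have habs : (∑ i, ∑ l, |U i l|) - (∑ i, ∑ l, |Uhat i l|)
      ≤ ∑ i, ∑ l, |(U - Uhat) i l| := by
    rw [← Finset.sum_sub_distrib]
    refine Finset.sum_le_sum fun i _ => ?_
    rw [← Finset.sum_sub_distrib]
    refine Finset.sum_le_sum fun l _ => ?_
    have := abs_sub_abs_le_abs_sub (U i l) (Uhat i l)
    simp only [Matrix.sub_apply]
    linarith [this]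
  have hSbound : Matrix.trace (Sᵀ * Δ) ≤ ρ * (∑ i, ∑ l, |(U - Uhat) i l|) := by
    rw [hSpart]
    have h1 : Matrix.trace (Uᵀ * S * U) - Matrix.trace (Uhatᵀ * S * Uhat)
        ≤ ρ * (∑ i, ∑ l, |U i l|) - ρ * (∑ i, ∑ l, |Uhat i l|) := by linarith
    calc Matrix.trace (Uᵀ * S * U) - Matrix.trace (Uhatᵀ * S * Uhat)
        ≤ ρ * ((∑ i, ∑ l, |U i l|) - (∑ i, ∑ l, |Uhat i l|)) := by rw [mul_sub]; exact h1
      _ ≤ ρ * (∑ i, ∑ l, |(U - Uhat) i l|) := mul_le_mul_of_nonneg_left habs hρ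
  -- sup bound
  have hM : ∀ i j, |(S - Γ) i j| ≤ M := by
    intro i j
    refine le_trans ?_
      (le_ciSup (f := fun i => ⨆ j, |(S - Γ) i j|) (Set.Finite.bddAbove (Set.finite_range _)) i)
    exact le_ciSup (f := fun j => |(S - Γ) i j|) (Set.Finite.bddAbove (Set.finite_range _)) j
  have hGbound : Matrix.trace ((Γ - S)ᵀ * Δ) ≤ M * (∑ i, ∑ j, |Δ i j|) := by
    rw [htr, Finset.mul_sum]
    refine Finset.sum_le_sum fun i _ => ?_
    rw [Finset.mul_sum]
    refine Finset.sum_le_sum fun j _ => ?_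
    have h1 : (Γ - S) i j * Δ i j ≤ |(Γ - S) i j| * |Δ i j| := by
      calc (Γ - S) i j * Δ i j ≤ |(Γ - S) i j * Δ i j| := le_abs_self _
        _ = |(Γ - S) i j| * |Δ i j| := abs_mul _ _
    have h2 : |(Γ - S) i j| = |(S - Γ) i j| := by
      simp only [Matrix.sub_apply]; rw [abs_sub_comm]
    exact h1.trans (mul_le_mul_of_nonneg_right (h2 ▸ hM i j) (abs_nonneg _))
  calc δ / 2 * (∑ i, ∑ j, (Δ i j) ^ 2) ≤ Matrix.trace (Γᵀ * Δ) := hcurv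
    _ = Matrix.trace ((Γ - S)ᵀ * Δ) + Matrix.trace (Sᵀ * Δ) := hsplit
    _ ≤ M * (∑ i, ∑ j, |Δ i j|) + ρ * (∑ i, ∑ l, |(U - Uhat) i l|) :=
        add_le_add hGbound hSbound
end
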